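/- arXiv:2512.09532 — 2 statements merged into one kernel-verified Lean document; each statement's English description precedes it below -/
import Mathlib

section
/- Let ∇ be a connection on (M, g) whose difference tensor K with the Levi-Civita connection satisfies g(∇_X Y, Z) = g(∇^g_X Y, Z) + (1/2)[T(X,Y,Z) + T(X,Z,fY) + T(Y,Z,fX)], where T is the torsion of ∇ and f is a (1,1)-tensor. Then the torsion of ∇ satisfies the identity T(Z,X,Y) + T(Z,Y,X) = T(X,Z,fY) + T(Y,Z,fX) for all vector fields X,Y,Z. -/
/-- If a metric connection `∇` on `(M,g)` satisfies the Einstein-connection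
formula `g(∇_X Y, Z) = g(∇^g_X Y, Z) + (1/2)[T(X,Y,Z) + T(X,Z,fY) + T(Y,Z,fX)]`
(written below multiplied by 2), where `T` is the torsion of `∇` and `f` is a
skew-symmetric (1,1)-tensor, then the torsion satisfies
`T(Z,X,Y) + T(Z,Y,X) = T(X,Z,fY) + T(Y,Z,fX)`. -/
theorem stmt_2 {V C : Type*} [AddCommGroup V] [CommRing C]
    (g : V → V → C)
    (hg_sym : ∀ a b : V, g a b = g b a)
    (hg_sub : ∀ a b c : V, g (a - b) c = g a c - g b c)
    (D : V → C → C)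
    (Lb : V → V → V)
    (nablaG nabla : V → V → V)
    (hTF : ∀ X Y : V, nablaG X Y - nablaG Y X = Lb X Y)
    (hLC : ∀ X Y Z : V, D X (g Y Z) = g (nablaG X Y) Z + g Y (nablaG X Z))
    -- ∇ is metric: ∇ g = 0
    (hMet : ∀ X Y Z : V, D X (g Y Z) = g (nabla X Y) Z + g Y (nabla X Z))
    (f : V → V) (hf : ∀ a b : V, g (f a) b = - g a (f b))
    (T : V → V → V) (hT : ∀ X Y : V, T X Y = nabla X Y - nabla Y X - Lb X Y)
    (Tt : V → V → V → C) (hTt : ∀ X Y Z : V, Tt X Y Z = g (T X Y) Z)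
    -- the Einstein connection formula (multiplied by 2)
    (hEin : ∀ X Y Z : V, 2 * g (nabla X Y) Z
      = 2 * g (nablaG X Y) Z + (Tt X Y Z + Tt X Z (f Y) + Tt Y Z (f X))) :
    ∀ X Y Z : V, Tt Z X Y + Tt Z Y X = Tt X Z (f Y) + Tt Y Z (f X) := by
  -- difference tensor K
  set k : V → V → V → C := fun A B Cc => g (nabla A B) Cc - g (nablaG A B) Cc with hk_def
  -- K is antisymmetric in its last two arguments (metric property)
  have hk : ∀ A B Cc : V, k A B Cc + k A Cc B = 0 := by
    intro A B Cc
    have h1 := hLC A B Cc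
    have h2 := hMet A B Cc
    have h3 : g (nabla A B) Cc + g B (nabla A Cc) = g (nablaG A B) Cc + g B (nablaG A Cc) :=
      h2.symm.trans h1
    rw [hg_sym B (nabla A Cc), hg_sym B (nablaG A Cc)] at h3
    simp only [hk_def]
    linear_combination h3
  -- torsion in terms of K
  have hTtK : ∀ A B Cc : V, Tt A B Cc = k A B Cc - k B A Cc := by
    intro A B Cc
    rw [hTt, hT, ← hTF, hg_sub, hg_sub, hg_sub]
    simp only [hk_def]
    ring
  intro X Y Z
  have t1 := hTtK X Y Z
  have t2 := hTtK Z X Y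
  have t3 := hTtK Z Y X
  have a1 := hk X Y Z
  have a2 := hk Y X Z
  have a3 := hk Z X Y
  have e1 : 2 * k X Y Z = Tt X Y Z + Tt X Z (f Y) + Tt Y Z (f X) := by
    have := hEin X Y Z
    simp only [hk_def]
    linear_combination this
  linear_combination t1 + t2 + t3 + e1 + a3 - a1 - a2
end

section
/- Let (M,g) be a Riemannian manifold, f a skew-symmetric (1,1)-tensor, ∇ a connection with difference tensor K, and define div_f X := Σ_i g(∇^g_{f e_i} X + K_{e_i} X, e_i) for an orthonormal frame {e_i}. Then div_f X = div_g(fX) − (div_g f)(X) + g(X, E*), where E* = Σ_i K*_{e_i} e_i and div_g f is the divergence of the (1,1)-tensor f. Consequently, div_f X = div_g(fX) for all X if and only if (div_g f)^♯ = E*. -/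
/-! The term `Σ g(∇^g_{f e_i} X, e_i)` is the trace of `∇^g X ∘ f`, which by cyclicity of the
trace is the trace of `f ∘ ∇^g X`, i.e. the `f(∇^g X)` part of `div_g(fX)`; the term
`Σ g(K_{e_i} X, e_i)` is `g(X, E*)` by definition of `K*`. For the equivalence, evaluate the
formula at a point where `∇^g X = 0`. -/

open scoped RealInnerProductSpace

namespace OrthonormalBasis

variable {V ι : Type*} [NormedAddCommGroup V] [InnerProductSpace ℝ V] [Fintype ι]
  (b : OrthonormalBasis ι ℝ V)

lemma sum_inner_apply_self_eq_trace (T : V →ₗ[ℝ] V) :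
    ∑ i, ⟪T (b i), b i⟫ = LinearMap.trace ℝ V T := by
  simp_rw [LinearMap.trace_eq_sum_inner T b, real_inner_comm]

lemma sum_inner_apply_apply_comm (A B : V →ₗ[ℝ] V) :
    ∑ i, ⟪A (B (b i)), b i⟫ = ∑ i, ⟪B (A (b i)), b i⟫ := by
  have := LinearMap.trace_mul_comm ℝ A B
  simpa only [← sum_inner_apply_self_eq_trace b, Module.End.mul_apply] using this

lemma sum_inner_apply_eq_inner_sum_adjoint (K Kstar : V → V → V)
    (hstar : ∀ X Y Z : V, ⟪Kstar X Y, Z⟫ = ⟪Y, K X Z⟫) (x : V) :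
    ∑ i, ⟪K (b i) x, b i⟫ = ⟪x, ∑ i, Kstar (b i) (b i)⟫ := by
  rw [inner_sum]
  refine Finset.sum_congr rfl fun i _ => ?_
  rw [real_inner_comm (Kstar _ _) x, hstar, real_inner_comm]

end OrthonormalBasis

theorem stmt_8_general {V ι : Type*} [NormedAddCommGroup V] [InnerProductSpace ℝ V] [Fintype ι]
    (b : OrthonormalBasis ι ℝ V)
    (f : V →ₗ[ℝ] V)
    (K Kstar : V → V → V)
    (hstar : ∀ X Y Z : V, ⟪Kstar X Y, Z⟫ = ⟪Y, K X Z⟫)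
    (Df : V →ₗ[ℝ] V →ₗ[ℝ] V)  -- (v, x) ↦ (∇^g_v f)(x)
    :
    (∀ (x : V) (DX : V →ₗ[ℝ] V),
      -- div_f X = div_g(fX) − (div_g f)(X) + g(X, E*)
      (∑ i, ⟪DX (f (b i)) + K (b i) x, b i⟫)
        = (∑ i, ⟪Df (b i) x + f (DX (b i)), b i⟫)
          - (∑ i, ⟪Df (b i) x, b i⟫)
          + ⟪x, ∑ i, Kstar (b i) (b i)⟫) ∧
    ((∀ (x : V) (DX : V →ₗ[ℝ] V),
        (∑ i, ⟪DX (f (b i)) + K (b i) x, b i⟫)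
          = ∑ i, ⟪Df (b i) x + f (DX (b i)), b i⟫)
      ↔ (∀ x : V, (∑ i, ⟪Df (b i) x, b i⟫) = ⟪x, ∑ i, Kstar (b i) (b i)⟫)) := by
  have hK := b.sum_inner_apply_eq_inner_sum_adjoint K Kstar hstar
  have hdiv : ∀ (x : V) (DX : V →ₗ[ℝ] V),
      (∑ i, ⟪DX (f (b i)) + K (b i) x, b i⟫)
        = (∑ i, ⟪Df (b i) x + f (DX (b i)), b i⟫)
          - (∑ i, ⟪Df (b i) x, b i⟫)
          + ⟪x, ∑ i, Kstar (b i) (b i)⟫ := by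
    intro x DX
    simp only [inner_add_left, Finset.sum_add_distrib]
    rw [b.sum_inner_apply_apply_comm DX f, hK]
    ring
  refine ⟨hdiv, fun h x => ?_, fun h x DX => ?_⟩
  · simpa only [LinearMap.zero_apply, map_zero, zero_add, add_zero, hK] using (h x 0).symm
  · rw [hdiv x DX, h x]
    ring

/-- Pointwise formulation (at a point, with orthonormal frame `{b i}`):
for a skew-symmetric (1,1)-tensor `f`, a (1,2)-tensor `K` with adjoint `K*`,
a vector field `X` with value `x` and covariant derivative `DX : v ↦ ∇^g_v X`,
and `Df : (v,x) ↦ (∇^g_v f)(x)` so that `∇^g_v (fX) = (∇^g_v f)(X) + f(∇^g_v X)`: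
`div_f X = div_g(fX) − (div_g f)(X) + g(X,E*)`, where
`div_f X = Σ_i g(∇^g_{f e_i} X + K_{e_i} X, e_i)`, `E* = Σ_i K*_{e_i} e_i`.
Consequently `div_f X = div_g(fX)` for all `X` iff `(div_g f)^♯ = E*`. -/
theorem stmt_8 {V ι : Type*} [NormedAddCommGroup V] [InnerProductSpace ℝ V] [Fintype ι]
    (b : OrthonormalBasis ι ℝ V)
    (f : V →ₗ[ℝ] V) (hf : ∀ x y : V, ⟪f x, y⟫ = - ⟪x, f y⟫)
    (K Kstar : V → V → V)
    (hstar : ∀ X Y Z : V, ⟪Kstar X Y, Z⟫ = ⟪Y, K X Z⟫)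
    (Df : V →ₗ[ℝ] V →ₗ[ℝ] V)  -- (v, x) ↦ (∇^g_v f)(x)
    :
    (∀ (x : V) (DX : V →ₗ[ℝ] V),
      -- div_f X = div_g(fX) − (div_g f)(X) + g(X, E*)
      (∑ i, ⟪DX (f (b i)) + K (b i) x, b i⟫)
        = (∑ i, ⟪Df (b i) x + f (DX (b i)), b i⟫)
          - (∑ i, ⟪Df (b i) x, b i⟫)
          + ⟪x, ∑ i, Kstar (b i) (b i)⟫) ∧
    ((∀ (x : V) (DX : V →ₗ[ℝ] V),
        (∑ i, ⟪DX (f (b i)) + K (b i) x, b i⟫)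
          = ∑ i, ⟪Df (b i) x + f (DX (b i)), b i⟫)
      ↔ (∀ x : V, (∑ i, ⟪Df (b i) x, b i⟫) = ⟪x, ∑ i, Kstar (b i) (b i)⟫)) :=
  stmt_8_general b f K Kstar hstar Df
end
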